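/- (Proposition 8.) (i) For every rich incomplete AF there is a constrained incomplete AF whose set of completions equals the set of completions of the rIAF. (ii) Suppose a, b ∈ U are distinct and let φ₀ = aw_a ∧ aw_b ∧ (att_{a,b} ∨ att_{b,a}) ∧ ¬(att_{a,b} ∧ att_{b,a}) ∧ ¬att_{a,a} ∧ ¬att_{b,b}. Then the cIAF ({a,b}, φ₀) has exactly the two completions ({a,b}, {(a,b)}) and ({a,b}, {(b,a)}), and no rIAF has this set of completions. Consequently cIAFs are strictly more expressive than rIAFs; and since every IAF (A^F, R^F, A^?, R^?) is an rIAF with R^↔ = ∅ having the same completions, cIAFs are also strictly more expressive than IAFs. -/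

import Mathlib

noncomputable section

namespace DLPA

/-- Propositional variables: awareness, acceptance, attack, auxiliary acceptance
copies, plus countably many further auxiliary variables. -/
inductive PVar (U : Type) : Type
  | aw : U → PVar U
  | inn : U → PVar U
  | att : U → U → PVar U
  | inn' : U → PVar U
  | aux : Nat → PVar U

-- DL-PA formulas and programs, by mutual recursion.
mutual
  inductive Form (U : Type) : Type
    | var : PVar U → Form U
    | neg : Form U → Form U
    | conj : Form U → Form U → Form U
    | box : Prog U → Form U → Form U
  inductive Prog (U : Type) : Type
    | add : PVar U → Prog U           -- +p
    | rem : PVar U → Prog U           -- −p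
    | test : Form U → Prog U          -- φ?
    | seq : Prog U → Prog U → Prog U
    | choice : Prog U → Prog U → Prog U
    | conv : Prog U → Prog U
end

variable {U : Type}

/-- A valuation is a set of propositional variables. -/
abbrev Val (U : Type) := Set (PVar U)

-- Satisfaction of formulas and interpretation of programs, by mutual recursion.
mutual
  def Sat : Val U → Form U → Prop
    | v, Form.var p => p ∈ v
    | v, Form.neg φ => ¬ Sat v φ
    | v, Form.conj φ ψ => Sat v φ ∧ Sat v ψ
    | v, Form.box π φ => ∀ w, Rel π v w → Sat w φ
  def Rel : Prog U → Val U → Val U → Prop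
    | Prog.add p, v, w => w = v ∪ {p}
    | Prog.rem p, v, w => w = v \ {p}
    | Prog.test φ, v, w => w = v ∧ Sat v φ
    | Prog.seq π₁ π₂, v, w => ∃ u, Rel π₁ v u ∧ Rel π₂ u w
    | Prog.choice π₁ π₂, v, w => Rel π₁ v w ∨ Rel π₂ v w
    | Prog.conv π, v, w => Rel π w v
end

def Form.falsum : Form U := Form.conj (Form.var (PVar.aux 0)) (Form.neg (Form.var (PVar.aux 0)))
def Form.top : Form U := Form.neg Form.falsum
def Form.impl (φ ψ : Form U) : Form U := Form.neg (Form.conj φ (Form.neg ψ))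
def Form.disj (φ ψ : Form U) : Form U := Form.neg (Form.conj (Form.neg φ) (Form.neg ψ))
def Form.equiv (φ ψ : Form U) : Form U := Form.conj (Form.impl φ ψ) (Form.impl ψ φ)
def Form.dia (π : Prog U) (φ : Form U) : Form U := Form.neg (Form.box π (Form.neg φ))
def Prog.skip : Prog U := Prog.test Form.top

/-- Sequential composition of a list of programs (`skip` for the empty list). -/
def seqList {β : Type} (f : β → Prog U) : List β → Prog U
  | [] => Prog.skip
  | p :: ps => Prog.seq (f p) (seqList f ps)

/-- Nondeterministic composition of a list of programs (`skip` for the empty list). -/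
def unionList {β : Type} (f : β → Prog U) : List β → Prog U
  | [] => Prog.skip
  | [p] => f p
  | p :: ps => Prog.choice (f p) (unionList f ps)

def mkTrueOne (L : List (PVar U)) : Prog U :=
  unionList (fun p => Prog.seq (Prog.test (Form.neg (Form.var p))) (Prog.add p)) L
def mkFalseOne (L : List (PVar U)) : Prog U :=
  unionList (fun p => Prog.seq (Prog.test (Form.var p)) (Prog.rem p)) L
def mkTrueSome (L : List (PVar U)) : Prog U :=
  seqList (fun p => Prog.choice (Prog.add p) Prog.skip) L
def mkFalseSome (L : List (PVar U)) : Prog U :=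
  seqList (fun p => Prog.choice (Prog.rem p) Prog.skip) L
def vary (L : List (PVar U)) : Prog U :=
  seqList (fun p => Prog.choice (Prog.add p) (Prog.rem p)) L
/-- dis(ATT_R): for each pair (x,y) in the list, make true att_{x,y} or att_{y,x}. -/
def dis (L : List (U × U)) : Prog U :=
  seqList (fun q => Prog.choice (Prog.add (PVar.att q.1 q.2)) (Prog.add (PVar.att q.2 q.1))) L

def conjList : List (Form U) → Form U
  | [] => Form.top
  | φ :: φs => Form.conj φ (conjList φs)
def disjList : List (Form U) → Form U
  | [] => Form.falsum
  | φ :: φs => Form.disj φ (disjList φs)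

/-- The elements of a finite universe in a fixed order. -/
def enum (U : Type) [Fintype U] : List U := Finset.univ.toList

def bigConj [Fintype U] (f : U → Form U) : Form U := conjList ((enum U).map f)
def bigDisj [Fintype U] (f : U → Form U) : Form U := disjList ((enum U).map f)

def INlist (U : Type) [Fintype U] : List (PVar U) := (enum U).map PVar.inn

/-- copy(IN_U) copies the value of in_x to in'_x, for every x ∈ U. -/
def copyIN (U : Type) [Fintype U] : Prog U :=
  seqList (fun x => Prog.choice
      (Prog.seq (Prog.test (Form.var (PVar.inn x))) (Prog.add (PVar.inn' x)))
      (Prog.seq (Prog.test (Form.neg (Form.var (PVar.inn x)))) (Prog.rem (PVar.inn' x))))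
    (enum U)

def Well (U : Type) [Fintype U] : Form U :=
  bigConj (fun x => Form.impl (Form.var (PVar.inn x)) (Form.var (PVar.aw x)))

def ConFree (U : Type) [Fintype U] : Form U :=
  Form.conj (Well U) (bigConj fun x => bigConj fun y =>
    Form.neg (Form.conj (Form.var (PVar.inn x))
      (Form.conj (Form.var (PVar.inn y)) (Form.var (PVar.att x y)))))

def AdmissibleF (U : Type) [Fintype U] : Form U :=
  Form.conj (ConFree U) (bigConj fun x => Form.impl (Form.var (PVar.inn x))
    (bigConj fun y => Form.impl (Form.conj (Form.var (PVar.aw y)) (Form.var (PVar.att y x)))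
      (bigDisj fun z => Form.conj (Form.var (PVar.inn z)) (Form.var (PVar.att z y)))))

def StableF (U : Type) [Fintype U] : Form U :=
  Form.conj (Well U) (bigConj fun x => Form.impl (Form.var (PVar.aw x))
    (Form.equiv (Form.var (PVar.inn x))
      (Form.neg (bigDisj fun y => Form.conj (Form.var (PVar.inn y)) (Form.var (PVar.att y x))))))

def CompleteF (U : Type) [Fintype U] : Form U :=
  Form.conj (ConFree U) (bigConj fun x => Form.equiv (Form.var (PVar.inn x))
    (bigConj fun y => Form.impl (Form.conj (Form.var (PVar.aw y)) (Form.var (PVar.att y x)))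
      (bigDisj fun z => Form.conj (Form.var (PVar.inn z)) (Form.var (PVar.att z y)))))

def GroundedF (U : Type) [Fintype U] : Form U :=
  Form.conj (CompleteF U)
    (Form.box (Prog.seq (mkFalseOne (INlist U)) (mkFalseSome (INlist U))) (Form.neg (CompleteF U)))

def PreferredF (U : Type) [Fintype U] : Form U :=
  Form.conj (AdmissibleF U)
    (Form.box (Prog.seq (mkTrueOne (INlist U)) (mkTrueSome (INlist U))) (Form.neg (AdmissibleF U)))

def NaiveF (U : Type) [Fintype U] : Form U :=
  Form.conj (ConFree U) (Form.box (mkTrueOne (INlist U)) (Form.neg (ConFree U)))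

def IncludedInCp (U : Type) [Fintype U] : Form U :=
  bigConj fun x => Form.impl
    (Form.disj (Form.var (PVar.inn x)) (Form.conj (Form.var (PVar.aw x))
      (bigDisj fun y => Form.conj (Form.var (PVar.inn y)) (Form.var (PVar.att y x)))))
    (Form.disj (Form.var (PVar.inn' x)) (Form.conj (Form.var (PVar.aw x))
      (bigDisj fun y => Form.conj (Form.var (PVar.inn' y)) (Form.var (PVar.att y x)))))

def IncludesCp (U : Type) [Fintype U] : Form U :=
  bigConj fun x => Form.impl
    (Form.disj (Form.var (PVar.inn' x)) (Form.conj (Form.var (PVar.aw x))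
      (bigDisj fun y => Form.conj (Form.var (PVar.inn' y)) (Form.var (PVar.att y x)))))
    (Form.disj (Form.var (PVar.inn x)) (Form.conj (Form.var (PVar.aw x))
      (bigDisj fun y => Form.conj (Form.var (PVar.inn y)) (Form.var (PVar.att y x)))))

/-- makeExt^σ = vary(IN_U); φ_σ? -/
def makeExt (U : Type) [Fintype U] (φ : Form U) : Prog U :=
  Prog.seq (vary (INlist U)) (Prog.test φ)

def SemiStableF (U : Type) [Fintype U] : Form U :=
  Form.conj (CompleteF U)
    (Form.box (Prog.seq (copyIN U) (makeExt U (CompleteF U)))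
      (Form.impl (IncludesCp U) (IncludedInCp U)))

/-- A_v -/
def Av (v : Val U) : Set U := {x | PVar.aw x ∈ v}
/-- R_v -/
def Rv (v : Val U) : Set (U × U) := {q | q.1 ∈ Av v ∧ q.2 ∈ Av v ∧ PVar.att q.1 q.2 ∈ v}
/-- E(v) -/
def Ev (v : Val U) : Set U := {x | PVar.inn x ∈ v}
/-- {x ∈ U : in'_x ∈ v} -/
def Cv (v : Val U) : Set U := {x | PVar.inn' x ∈ v}
/-- v_(A,R) = AW_A ∪ ATT_R -/
def valOf (A : Set U) (R : Set (U × U)) : Val U :=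
  (PVar.aw '' A) ∪ ((fun q : U × U => PVar.att q.1 q.2) '' R)

/-- E⁺, the set of arguments of A attacked by E in (A,R). -/
def attacked (A : Set U) (R : Set (U × U)) (E : Set U) : Set U :=
  {x ∈ A | ∃ y ∈ E, (y, x) ∈ R}
/-- E⊕ = E ∪ E⁺, the range of E. -/
def rangeOf (A : Set U) (R : Set (U × U)) (E : Set U) : Set U :=
  E ∪ attacked A R E

def IsConflictFree (A : Set U) (R : Set (U × U)) (E : Set U) : Prop :=
  E ⊆ A ∧ E ∩ attacked A R E = ∅
def Defends (A : Set U) (R : Set (U × U)) (E : Set U) (a : U) : Prop :=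
  ∀ x ∈ A, (x, a) ∈ R → x ∈ attacked A R E
def IsAdmissibleExt (A : Set U) (R : Set (U × U)) (E : Set U) : Prop :=
  IsConflictFree A R E ∧ ∀ a ∈ E, Defends A R E a
def IsStableExt (A : Set U) (R : Set (U × U)) (E : Set U) : Prop :=
  IsConflictFree A R E ∧ A \ E ⊆ attacked A R E
def IsCompleteExt (A : Set U) (R : Set (U × U)) (E : Set U) : Prop :=
  IsConflictFree A R E ∧ E = {a ∈ A | Defends A R E a}
def IsGroundedExt (A : Set U) (R : Set (U × U)) (E : Set U) : Prop :=
  IsCompleteExt A R E ∧ ∀ E', IsCompleteExt A R E' → E' ⊆ E → E' = E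
def IsPreferredExt (A : Set U) (R : Set (U × U)) (E : Set U) : Prop :=
  IsCompleteExt A R E ∧ ∀ E', IsCompleteExt A R E' → E ⊆ E' → E' = E
def IsNaiveExt (A : Set U) (R : Set (U × U)) (E : Set U) : Prop :=
  IsConflictFree A R E ∧ ∀ E', IsConflictFree A R E' → E ⊆ E' → E' = E
def IsSemiStableExt (A : Set U) (R : Set (U × U)) (E : Set U) : Prop :=
  IsCompleteExt A R E ∧ ¬ ∃ E', IsCompleteExt A R E' ∧ rangeOf A R E ⊂ rangeOf A R E'

end DLPA

end

noncomputable section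
open DLPA

/-- The list of awareness variables of a finite set of arguments, in a fixed order. -/
def AWlist {U : Type} (A : Finset U) : List (PVar U) := A.toList.map PVar.aw
/-- The list of attack variables of a finite attack relation, in a fixed order. -/
def ATTlist {U : Type} (R : Finset (U × U)) : List (PVar U) :=
  R.toList.map (fun q => PVar.att q.1 q.2)

/-- The defining conditions of an incomplete AF (A^F, R^F, A^?, R^?). -/
def IAFConds {U : Type} (AF Aq : Set U) (RF Rq : Set (U × U)) : Prop :=
  Disjoint AF Aq ∧ Disjoint RF Rq ∧
    RF ⊆ (AF ∪ Aq) ×ˢ (AF ∪ Aq) ∧ Rq ⊆ (AF ∪ Aq) ×ˢ (AF ∪ Aq)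

/-- (A*, R*) is a completion of the IAF (A^F, R^F, A^?, R^?). -/
def IsCompletionOfIAF {U : Type} (AF Aq : Set U) (RF Rq : Set (U × U))
    (As : Set U) (Rs : Set (U × U)) : Prop :=
  AF ⊆ As ∧ As ⊆ AF ∪ Aq ∧
    RF ∩ As ×ˢ As ⊆ Rs ∧ Rs ⊆ (RF ∪ Rq) ∩ As ×ˢ As

end

noncomputable section
open DLPA

/-- The defining conditions of a rich incomplete AF (A^F, R^F, A^?, R^?, R^↔). -/
def RIAFConds {U : Type} (AF Aq : Set U) (RF Rq Rl : Set (U × U)) : Prop :=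
  Disjoint AF Aq ∧ Disjoint RF Rq ∧ Disjoint RF Rl ∧ Disjoint Rq Rl ∧
    RF ⊆ (AF ∪ Aq) ×ˢ (AF ∪ Aq) ∧ Rq ⊆ (AF ∪ Aq) ×ˢ (AF ∪ Aq) ∧
    Rl ⊆ (AF ∪ Aq) ×ˢ (AF ∪ Aq) ∧
    (∀ x y, (x, y) ∈ Rl → (y, x) ∈ Rl) ∧ (∀ x, (x, x) ∉ Rl)

/-- (A*, R*) is a completion of the rIAF (A^F, R^F, A^?, R^?, R^↔). -/
def IsCompletionOfRIAF {U : Type} (AF Aq : Set U) (RF Rq Rl : Set (U × U))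
    (As : Set U) (Rs : Set (U × U)) : Prop :=
  AF ⊆ As ∧ As ⊆ AF ∪ Aq ∧
    RF ∩ As ×ˢ As ⊆ Rs ∧ Rs ⊆ (RF ∪ Rq ∪ Rl) ∩ As ×ˢ As ∧
    ∀ x y, x ∈ As → y ∈ As → (x, y) ∈ Rl → ((x, y) ∈ Rs ∨ (y, x) ∈ Rs)

end

noncomputable section
open DLPA

/-- φ is a program-free (Boolean) formula using only variables from S. -/
def UsesOnly {U : Type} (S : Set (PVar U)) : Form U → Prop
  | Form.var p => p ∈ S
  | Form.neg φ => UsesOnly S φ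
  | Form.conj φ ψ => UsesOnly S φ ∧ UsesOnly S ψ
  | Form.box _ _ => False

/-- AW_A ∪ ATT_{A×A}, the vocabulary of a constrained incomplete AF with domain A. -/
def cVocab {U : Type} (A : Set U) : Set (PVar U) :=
  (PVar.aw '' A) ∪ ((fun q : U × U => PVar.att q.1 q.2) '' (A ×ˢ A))

/-- AW_A ∪ IN_A ∪ ATT_{A×A}. -/
def cVocabFull {U : Type} (A : Set U) : Set (PVar U) :=
  cVocab A ∪ (PVar.inn '' A)

/-- (A*, R*) belongs to completions(A, φ). -/
def IsCCompletion {U : Type} (A : Set U) (φ : Form U)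
    (As : Set U) (Rs : Set (U × U)) : Prop :=
  ∃ v : Val U, v ⊆ cVocabFull A ∧ Sat v φ ∧ Av v = As ∧ Rv v = Rs

end

noncomputable section
open DLPA

/-- φ₀ = aw_a ∧ aw_b ∧ (att_{a,b} ∨ att_{b,a}) ∧ ¬(att_{a,b} ∧ att_{b,a}) ∧ ¬att_{a,a} ∧ ¬att_{b,b}. -/
def phi0 {U : Type} (a b : U) : Form U :=
  Form.conj (Form.var (PVar.aw a)) (Form.conj (Form.var (PVar.aw b))
    (Form.conj (Form.disj (Form.var (PVar.att a b)) (Form.var (PVar.att b a)))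
      (Form.conj (Form.neg (Form.conj (Form.var (PVar.att a b)) (Form.var (PVar.att b a))))
        (Form.conj (Form.neg (Form.var (PVar.att a a))) (Form.neg (Form.var (PVar.att b b)))))))

end

/-!
An rIAF is described by the Boolean constraint listing its conditions: the fixed arguments are
aware, a fixed attack between aware arguments is present, a pair of `R^↔` between aware arguments
is attacked in at least one direction, and no attack outside `R^F ∪ R^? ∪ R^↔` occurs.

On the other hand, two completions of an rIAF with the same arguments can be merged by taking
the union of their attack relations. Merging the completions `({a,b}, {(a,b)})` and
`({a,b}, {(b,a)})` of `({a,b}, φ₀)` yields the mutual attack, which `φ₀` excludes.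
-/

namespace DLPA

variable {U : Type}

section Semantics

variable (v : Val U)

lemma sat_impl (φ ψ : Form U) : Sat v (.impl φ ψ) ↔ (Sat v φ → Sat v ψ) := by
  simp [Form.impl, Sat]

lemma sat_disj (φ ψ : Form U) : Sat v (.disj φ ψ) ↔ (Sat v φ ∨ Sat v ψ) := by
  simp [Form.disj, Sat, or_iff_not_and_not]

lemma sat_foldr_conj (τ : Form U) (l : List (Form U)) :
    Sat v (l.foldr .conj τ) ↔ (∀ ψ ∈ l, Sat v ψ) ∧ Sat v τ := by
  induction l with
  | nil => simp
  | cons ψ l ih => simp [Sat, ih, and_assoc]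

lemma usesOnly_foldr_conj (S : Set (PVar U)) (τ : Form U) (l : List (Form U)) :
    UsesOnly S (l.foldr .conj τ) ↔ (∀ ψ ∈ l, UsesOnly S ψ) ∧ UsesOnly S τ := by
  induction l with
  | nil => simp
  | cons ψ l ih => simp [UsesOnly, ih, and_assoc]

end Semantics

section Valuations

lemma aw_mem_valOf {A : Set U} {R : Set (U × U)} {x : U} :
    PVar.aw x ∈ valOf A R ↔ x ∈ A := by
  simp [valOf]

lemma att_mem_valOf {A : Set U} {R : Set (U × U)} {x y : U} :
    PVar.att x y ∈ valOf A R ↔ (x, y) ∈ R := by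
  simp [valOf]

lemma Av_valOf (A : Set U) (R : Set (U × U)) : Av (valOf A R) = A := by
  ext x
  exact aw_mem_valOf

lemma mem_Rv {v : Val U} {x y : U} :
    (x, y) ∈ Rv v ↔ x ∈ Av v ∧ y ∈ Av v ∧ PVar.att x y ∈ v :=
  Iff.rfl

lemma Rv_valOf {A : Set U} {R : Set (U × U)} (h : R ⊆ A ×ˢ A) : Rv (valOf A R) = R := by
  ext q
  simp only [Rv, Av_valOf, att_mem_valOf]
  exact ⟨fun h => h.2.2, fun hq => ⟨(h hq).1, (h hq).2, hq⟩⟩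

@[simp]
lemma aw_mem_cVocab {A : Set U} {x : U} : PVar.aw x ∈ cVocab A ↔ x ∈ A := by
  simp [cVocab]

@[simp]
lemma att_mem_cVocab {A : Set U} {x y : U} : PVar.att x y ∈ cVocab A ↔ x ∈ A ∧ y ∈ A := by
  simp [cVocab]

lemma mem_of_aw_mem_cVocabFull {A : Set U} {x : U} (h : PVar.aw x ∈ cVocabFull A) :
    x ∈ A := by
  simpa [cVocabFull, cVocab] using h

lemma mem_of_att_mem_cVocabFull {A : Set U} {x y : U} (h : PVar.att x y ∈ cVocabFull A) :
    x ∈ A ∧ y ∈ A := by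
  simpa [cVocabFull, cVocab] using h

lemma isCCompletion_of_sat_valOf {A As : Set U} {Rs : Set (U × U)} {φ : Form U}
    (hAs : As ⊆ A) (hRs : Rs ⊆ As ×ˢ As) (hφ : Sat (valOf As Rs) φ) :
    IsCCompletion A φ As Rs := by
  refine ⟨valOf As Rs, ?_, hφ, Av_valOf As Rs, Rv_valOf hRs⟩
  rintro p (⟨x, hx, rfl⟩ | ⟨q, hq, rfl⟩)
  · exact Or.inl (Or.inl ⟨x, hAs hx, rfl⟩)
  · exact Or.inl (Or.inr ⟨q, Set.prod_mono hAs hAs (hRs hq), rfl⟩)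

end Valuations

section Completions

variable {AF Aq : Set U} {RF Rq Rl : Set (U × U)} {As : Set U} {R₁ R₂ : Set (U × U)}

lemma IsCompletionOfRIAF.union (h₁ : IsCompletionOfRIAF AF Aq RF Rq Rl As R₁)
    (h₂ : IsCompletionOfRIAF AF Aq RF Rq Rl As R₂) :
    IsCompletionOfRIAF AF Aq RF Rq Rl As (R₁ ∪ R₂) :=
  ⟨h₁.1, h₁.2.1, h₁.2.2.1.trans Set.subset_union_left, Set.union_subset h₁.2.2.2.1 h₂.2.2.2.1,
    fun x y hx hy hxy => (h₁.2.2.2.2 x y hx hy hxy).imp Or.inl Or.inl⟩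

lemma IAFConds.riafConds (h : IAFConds AF Aq RF Rq) : RIAFConds AF Aq RF Rq ∅ := by
  obtain ⟨h1, h2, h3, h4⟩ := h
  exact ⟨h1, h2, by simp, by simp, h3, h4, by simp, by simp, by simp⟩

lemma isCompletionOfIAF_iff_riaf_empty (Rs : Set (U × U)) :
    IsCompletionOfIAF AF Aq RF Rq As Rs ↔ IsCompletionOfRIAF AF Aq RF Rq ∅ As Rs := by
  simp [IsCompletionOfIAF, IsCompletionOfRIAF]

end Completions

section RiafFormula

variable [Fintype U] (a : U) (A AF Aq : Set U) (RF Rq Rl : Set (U × U))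

open Classical in
/-- The seed `aw_a → aw_a` stands in for `⊤`: `Form.top` is built from an auxiliary variable
outside the vocabulary `AW_A ∪ ATT_{A×A}`, which has no constants. -/
noncomputable def riafFormula : Form U :=
  List.foldr .conj (.impl (.var (.aw a)) (.var (.aw a))) <|
    (Finset.univ.filter (· ∈ AF)).toList.map (fun x => .var (.aw x)) ++
    (Finset.univ.filter (· ∈ A \ (AF ∪ Aq))).toList.map (fun x => .neg (.var (.aw x))) ++
    (Finset.univ.filter (· ∈ RF)).toList.map (fun q =>
      .impl (.conj (.var (.aw q.1)) (.var (.aw q.2))) (.var (.att q.1 q.2))) ++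
    (Finset.univ.filter (· ∈ Rl)).toList.map (fun q =>
      .impl (.conj (.var (.aw q.1)) (.var (.aw q.2)))
        (.disj (.var (.att q.1 q.2)) (.var (.att q.2 q.1)))) ++
    (Finset.univ.filter (· ∈ A ×ˢ A \ (RF ∪ Rq ∪ Rl))).toList.map (fun q =>
      .neg (.var (.att q.1 q.2)))

lemma sat_riafFormula (v : Val U) :
    Sat v (riafFormula a A AF Aq RF Rq Rl) ↔
      (∀ x ∈ AF, PVar.aw x ∈ v) ∧
      (∀ x ∈ A \ (AF ∪ Aq), PVar.aw x ∉ v) ∧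
      (∀ q ∈ RF, PVar.aw q.1 ∈ v → PVar.aw q.2 ∈ v → PVar.att q.1 q.2 ∈ v) ∧
      (∀ q ∈ Rl, PVar.aw q.1 ∈ v → PVar.aw q.2 ∈ v →
        PVar.att q.1 q.2 ∈ v ∨ PVar.att q.2 q.1 ∈ v) ∧
      (∀ q ∈ A ×ˢ A \ (RF ∪ Rq ∪ Rl), PVar.att q.1 q.2 ∉ v) := by
  simp only [riafFormula, sat_foldr_conj, List.forall_mem_append, List.forall_mem_map,
    Finset.mem_toList, Finset.mem_filter, Finset.mem_univ, true_and]
  simp [sat_impl, sat_disj, Sat, and_assoc]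

lemma usesOnly_riafFormula (ha : a ∈ A) (hAF : AF ⊆ A) (hRF : RF ⊆ A ×ˢ A)
    (hRl : Rl ⊆ A ×ˢ A) :
    UsesOnly (cVocab A) (riafFormula a A AF Aq RF Rq Rl) := by
  simp only [riafFormula, usesOnly_foldr_conj, List.forall_mem_append, List.forall_mem_map,
    Finset.mem_toList, Finset.mem_filter, Finset.mem_univ, true_and]
  simp only [UsesOnly, Form.impl, Form.disj, aw_mem_cVocab, att_mem_cVocab]
  exact ⟨⟨⟨⟨⟨fun x hx => hAF hx, fun x hx => hx.1⟩, fun q hq => ⟨hRF hq, hRF hq⟩⟩,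
    fun q hq => ⟨hRl hq, hRl hq, (hRl hq).2, (hRl hq).1⟩⟩, fun q hq => hq.1⟩, ha, ha⟩

variable {A AF Aq RF Rq Rl} in
lemma isCCompletion_riafFormula_iff (hA : AF ∪ Aq ⊆ A) (As : Set U) (Rs : Set (U × U)) :
    IsCCompletion A (riafFormula a A AF Aq RF Rq Rl) As Rs ↔
      IsCompletionOfRIAF AF Aq RF Rq Rl As Rs := by
  constructor
  · rintro ⟨v, hv, hφ, rfl, rfl⟩
    obtain ⟨hAF, hextra, hRF, hRl, hforbid⟩ := (sat_riafFormula a A AF Aq RF Rq Rl v).1 hφ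
    have hAv : Av v ⊆ A := fun x hx => mem_of_aw_mem_cVocabFull (hv hx)
    refine ⟨hAF, fun x hx => ?_, fun q ⟨hq, hq1, hq2⟩ => ⟨hq1, hq2, hRF q hq hq1 hq2⟩,
      fun q ⟨hq1, hq2, hq⟩ => ⟨?_, hq1, hq2⟩,
      fun x y hx hy hxy => (hRl (x, y) hxy hx hy).imp (⟨hx, hy, ·⟩) (⟨hy, hx, ·⟩)⟩
    · by_contra hx'
      exact hextra x ⟨hAv hx, hx'⟩ hx
    · by_contra hq'
      exact hforbid q ⟨mem_of_att_mem_cVocabFull (hv hq), hq'⟩ hq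
  · rintro ⟨hAF, hAs, hRF, hRs, hRl⟩
    have hRsAs : Rs ⊆ As ×ˢ As := fun q hq => (hRs hq).2
    refine isCCompletion_of_sat_valOf (hAs.trans hA) hRsAs ?_
    simp only [sat_riafFormula, aw_mem_valOf, att_mem_valOf]
    refine ⟨hAF, fun x hx hxAs => hx.2 (hAs hxAs), fun q hq h1 h2 => hRF ⟨hq, h1, h2⟩,
      fun q hq h1 h2 => hRl q.1 q.2 h1 h2 hq, fun q hq hqRs => hq.2 (hRs hqRs).1⟩

end RiafFormula

theorem exists_ciaf_of_riafConds [Fintype U] [Nonempty U] {AF Aq : Set U}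
    {RF Rq Rl : Set (U × U)} (h : RIAFConds AF Aq RF Rq Rl) :
    ∃ (A : Set U) (φ : Form U), UsesOnly (cVocab A) φ ∧
      ∀ (As : Set U) (Rs : Set (U × U)),
        IsCCompletion A φ As Rs ↔ IsCompletionOfRIAF AF Aq RF Rq Rl As Rs := by
  obtain ⟨-, -, -, -, hRF, -, hRl, -⟩ := h
  obtain ⟨a⟩ := ‹Nonempty U›
  have hA : AF ∪ Aq ⊆ insert a (AF ∪ Aq) := Set.subset_insert a _
  have hAA := Set.prod_mono hA hA
  exact ⟨_, riafFormula a _ AF Aq RF Rq Rl,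
    usesOnly_riafFormula a _ AF Aq RF Rq Rl (Set.mem_insert a _)
      (Set.subset_union_left.trans hA) (hRF.trans hAA) (hRl.trans hAA),
    isCCompletion_riafFormula_iff a hA⟩

section OrientedAttack

variable {a b : U}

lemma sat_phi0 (v : Val U) :
    Sat v (phi0 a b) ↔
      PVar.aw a ∈ v ∧ PVar.aw b ∈ v ∧ (PVar.att a b ∈ v ↔ PVar.att b a ∉ v) ∧
        PVar.att a a ∉ v ∧ PVar.att b b ∉ v := by
  simp only [phi0, Sat, sat_disj]
  tauto

theorem isCCompletion_phi0_iff (hab : a ≠ b) (As : Set U) (Rs : Set (U × U)) :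
    IsCCompletion {a, b} (phi0 a b) As Rs ↔ As = {a, b} ∧ (Rs = {(a, b)} ∨ Rs = {(b, a)}) := by
  constructor
  · rintro ⟨v, hv, hφ, rfl, rfl⟩
    obtain ⟨ha, hb, hxor, haa, hbb⟩ := (sat_phi0 v).1 hφ
    have hAv : Av v = {a, b} := by
      ext x
      refine ⟨fun hx => mem_of_aw_mem_cVocabFull (hv hx), ?_⟩
      rintro (rfl | rfl) <;> assumption
    have hatt {x y} (h : PVar.att x y ∈ v) : (x = a ∨ x = b) ∧ (y = a ∨ y = b) :=
      mem_of_att_mem_cVocabFull (hv h)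
    have hRv : Rv v = {q | q = (a, b) ∧ PVar.att a b ∈ v ∨ q = (b, a) ∧ PVar.att b a ∈ v} := by
      ext ⟨x, y⟩
      simp only [mem_Rv, hAv, Set.mem_ofPred_eq, Prod.mk.injEq]
      constructor
      · rintro ⟨-, -, h⟩
        obtain ⟨rfl | rfl, rfl | rfl⟩ := hatt h <;> simp_all
      · rintro (⟨⟨rfl, rfl⟩, h⟩ | ⟨⟨rfl, rfl⟩, h⟩) <;> simp [h]
    refine ⟨hAv, ?_⟩
    by_cases hab_att : PVar.att a b ∈ v
    · exact Or.inl (by simp [hRv, hab_att, hxor.1 hab_att])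
    · exact Or.inr (by simp [hRv, hab_att, not_not.1 (mt hxor.2 hab_att)])
  · rintro ⟨rfl, hRs⟩
    refine isCCompletion_of_sat_valOf subset_rfl ?_ ?_
    · rcases hRs with rfl | rfl <;> simp
    · rcases hRs with rfl | rfl <;> simp [sat_phi0, aw_mem_valOf, att_mem_valOf, hab, hab.symm]

theorem not_exists_riaf_completions_eq_phi0 (hab : a ≠ b) :
    ¬ ∃ (AF Aq : Set U) (RF Rq Rl : Set (U × U)), RIAFConds AF Aq RF Rq Rl ∧
        ∀ (As : Set U) (Rs : Set (U × U)),
          IsCompletionOfRIAF AF Aq RF Rq Rl As Rs ↔ IsCCompletion {a, b} (phi0 a b) As Rs := by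
  rintro ⟨AF, Aq, RF, Rq, Rl, -, h⟩
  have hcompl Rs := (h {a, b} Rs).trans (isCCompletion_phi0_iff hab _ _)
  have h₁ := (hcompl {(a, b)}).2 ⟨rfl, Or.inl rfl⟩
  have h₂ := (hcompl {(b, a)}).2 ⟨rfl, Or.inr rfl⟩
  obtain ⟨-, hsingle⟩ := (hcompl _).1 (IsCompletionOfRIAF.union h₁ h₂)
  simp [Set.ext_iff, hab, hab.symm] at hsingle

end OrientedAttack

end DLPA

open DLPA in
/-- Proposition 8: cIAFs are strictly more expressive than (r)IAFs. -/
theorem ciaf_strictly_more_expressive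
    (U : Type) [Fintype U] [Nonempty U] (a b : U) (hab : a ≠ b) :
    -- (i) every rIAF has an equivalent cIAF
    (∀ (AF Aq : Set U) (RF Rq Rl : Set (U × U)), RIAFConds AF Aq RF Rq Rl →
      ∃ (A : Set U) (φ : Form U), UsesOnly (cVocab A) φ ∧
        ∀ (As : Set U) (Rs : Set (U × U)),
          IsCCompletion A φ As Rs ↔ IsCompletionOfRIAF AF Aq RF Rq Rl As Rs) ∧
    -- (ii) the completions of ({a,b}, φ₀) are exactly ({a,b},{(a,b)}) and ({a,b},{(b,a)})
    (∀ (As : Set U) (Rs : Set (U × U)),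
        IsCCompletion {a, b} (phi0 a b) As Rs ↔
          (As = {a, b} ∧ (Rs = {(a, b)} ∨ Rs = {(b, a)}))) ∧
    -- and no rIAF has this set of completions
    (¬ ∃ (AF Aq : Set U) (RF Rq Rl : Set (U × U)), RIAFConds AF Aq RF Rq Rl ∧
        ∀ (As : Set U) (Rs : Set (U × U)),
          IsCompletionOfRIAF AF Aq RF Rq Rl As Rs ↔ IsCCompletion {a, b} (phi0 a b) As Rs) ∧
    -- every IAF is an rIAF with R^↔ = ∅ having the same completions
    (∀ (AF Aq : Set U) (RF Rq : Set (U × U)), IAFConds AF Aq RF Rq →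
      RIAFConds AF Aq RF Rq ∅ ∧
      ∀ (As : Set U) (Rs : Set (U × U)),
        IsCompletionOfIAF AF Aq RF Rq As Rs ↔ IsCompletionOfRIAF AF Aq RF Rq ∅ As Rs) ∧
    -- hence no IAF has the set of completions of ({a,b}, φ₀) either
    (¬ ∃ (AF Aq : Set U) (RF Rq : Set (U × U)), IAFConds AF Aq RF Rq ∧
        ∀ (As : Set U) (Rs : Set (U × U)),
          IsCompletionOfIAF AF Aq RF Rq As Rs ↔ IsCCompletion {a, b} (phi0 a b) As Rs) := by
  refine ⟨fun _ _ _ _ _ => exists_ciaf_of_riafConds, isCCompletion_phi0_iff hab,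
    not_exists_riaf_completions_eq_phi0 hab,
    fun _ _ _ _ h => ⟨h.riafConds, fun _ => isCompletionOfIAF_iff_riaf_empty⟩, ?_⟩
  rintro ⟨AF, Aq, RF, Rq, hc, h⟩
  exact not_exists_riaf_completions_eq_phi0 hab ⟨AF, Aq, RF, Rq, ∅, hc.riafConds,
    fun As Rs => (isCompletionOfIAF_iff_riaf_empty Rs).symm.trans (h As Rs)⟩
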